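/- arXiv:1502.04404 — 2 statements merged into one kernel-verified Lean document; each statement's English description precedes it below -/
import Mathlib

section
/- For every integer k ≥ 0 and every real x > 0, the k-th derivative of the function x ↦ e^{−x^{−m}} satisfies |D^k(e^{−x^{−m}})(x)| ≤ (8m)^k · k^{(1+1/m)·k}, with the convention 0⁰ = 1. -/
/-!
The function extends holomorphically to `z ↦ exp (-(z ^ m)⁻¹)` on `ℂ ∖ {0}`, whose complex
derivatives at `x > 0` are the real ones. On the disc of radius `x / (4m)` about `x` we have
`z ^ m = x ^ m (1 + w) ^ m` with `‖(1 + w) ^ m - 1‖ ≤ 1/3`, hence `Re (z ^ m)⁻¹ ≥ (x ^ m)⁻¹ / 2`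
and the extension is bounded by `exp (-(x ^ m)⁻¹ / 2)` there. Cauchy's estimate then gives
`k! (4m / x) ^ k exp (-(x ^ m)⁻¹ / 2)`, and maximising `t ^ (k/m) exp (-t/2)` over `t = (x ^ m)⁻¹`
bounds `x⁻ᵏ exp (-(x ^ m)⁻¹ / 2)` by `(2k) ^ (k/m)`; the rest is `k! ≤ kᵏ`.
-/

open Metric
open scoped Nat

theorem norm_one_add_pow_sub_one_le {R : Type*} [NormedRing R] [NormOneClass R] (w : R) (n : ℕ) :
    ‖(1 + w) ^ n - 1‖ ≤ (1 + ‖w‖) ^ n - 1 := by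
  induction n with
  | zero => simp
  | succ n ih =>
    calc ‖(1 + w) ^ (n + 1) - 1‖ = ‖((1 + w) ^ n - 1) * (1 + w) + w‖ := by noncomm_ring
      _ ≤ ((1 + ‖w‖) ^ n - 1) * (1 + ‖w‖) + ‖w‖ := by
          grw [norm_add_le, norm_mul_le, ih, norm_add_le, norm_one]
          exact (norm_nonneg _).trans ih
      _ = (1 + ‖w‖) ^ (n + 1) - 1 := by ring

theorem one_add_inv_four_mul_pow_le (m : ℕ) : (1 + (4 * m : ℝ)⁻¹) ^ m ≤ 4 / 3 := by
  rcases eq_or_ne m 0 with rfl | hm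
  · norm_num
  calc (1 + (4 * m : ℝ)⁻¹) ^ m ≤ Real.exp (4 * m : ℝ)⁻¹ ^ m := by
        gcongr
        linarith [Real.add_one_le_exp (4 * m : ℝ)⁻¹]
    _ = Real.exp (1 / 4) := by
        rw [← Real.exp_nat_mul]
        field_simp
    _ ≤ 4 / 3 := by
        have := Real.exp_bound_div_one_sub_of_interval' (x := 1 / 4) (by norm_num) (by norm_num)
        norm_num at this ⊢
        linarith

theorem Complex.two_inv_le_re_inv {u : ℂ} (hu : ‖u - 1‖ ≤ 1 / 3) : 2⁻¹ ≤ (u⁻¹).re := by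
  have hu_norm : 2 / 3 ≤ ‖u‖ := by
    have := norm_sub_norm_le 1 u
    rw [norm_sub_rev 1 u, norm_one] at this
    linarith
  have hu0 : u ≠ 0 := norm_pos_iff.mp (by linarith)
  have : ‖u⁻¹ - 1‖ ≤ 2⁻¹ := by
    rw [show u⁻¹ - 1 = -(u - 1) / u by field_simp; ring, norm_div, norm_neg,
      div_le_iff₀ (by linarith)]
    linarith
  have := (abs_le.mp ((Complex.abs_re_le_norm _).trans this)).1
  simp only [Complex.sub_re, Complex.one_re] at this
  linarith

theorem Real.rpow_mul_exp_neg_mul_le {a b t : ℝ} (ha : 0 ≤ a) (hb : 0 < b) (ht : 0 ≤ t) :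
    t ^ a * Real.exp (-(b * t)) ≤ (a / b) ^ a := by
  rcases ha.eq_or_lt with rfl | ha
  · simpa using Real.exp_le_one_iff.mpr (by nlinarith : -(b * t) ≤ 0)
  have hscaled : (b * t / a) ^ a ≤ Real.exp (b * t) := by
    calc (b * t / a) ^ a ≤ Real.exp (b * t / a) ^ a := by
          gcongr
          linarith [Real.add_one_le_exp (b * t / a)]
      _ = Real.exp (b * t) := by rw [← Real.exp_mul, div_mul_cancel₀ _ ha.ne']
  calc t ^ a * Real.exp (-(b * t)) = (a / b) ^ a * ((b * t / a) ^ a * Real.exp (-(b * t))) := by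
        rw [← mul_assoc, ← Real.mul_rpow (by positivity) (by positivity)]
        congr 2
        field_simp
    _ ≤ (a / b) ^ a * (Real.exp (b * t) * Real.exp (-(b * t))) := by gcongr
    _ = (a / b) ^ a := by rw [← Real.exp_add, add_neg_cancel, Real.exp_zero, mul_one]

theorem Complex.iteratedDeriv_ofReal_eq {F : ℂ → ℂ} {g : ℝ → ℝ} {U : Set ℂ} {S : Set ℝ}
    (hU : IsOpen U) (hF : DifferentiableOn ℂ F U) (hS : IsOpen S) (hSU : Set.MapsTo (↑) S U)
    (hgF : ∀ y ∈ S, (g y : ℂ) = F y) (k : ℕ) {y : ℝ} (hy : y ∈ S) :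
    Complex.ofReal (iteratedDeriv k g y) = iteratedDeriv k F y := by
  induction k generalizing y with
  | zero => simpa using hgF y hy
  | succ k ih =>
    have hF' : HasDerivAt (iteratedDeriv k F) (iteratedDeriv (k + 1) F y) y := by
      rw [iteratedDeriv_succ, iteratedDeriv_eq_iterate]
      exact ((hF.analyticOnNhd hU).iterated_deriv k y (hSU hy)).differentiableAt.hasDerivAt
    have hS' : ∀ᶠ t in nhds y, t ∈ S := hS.mem_nhds hy
    have hg' : HasDerivAt (iteratedDeriv k g) (iteratedDeriv (k + 1) F y).re y :=
      hF'.real_of_complex.congr_of_eventuallyEq (hS'.mono fun t ht => by simp [← ih ht])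
    rw [iteratedDeriv_succ, hg'.deriv]
    exact hg'.ofReal_comp.unique
      (hF'.comp_ofReal.congr_of_eventuallyEq (hS'.mono fun t ht => ih ht))

theorem le_re_inv_pow_of_mem_closedBall {m : ℕ} {x : ℝ} (hx : 0 < x) {z : ℂ}
    (hz : z ∈ closedBall (x : ℂ) (x / (4 * m))) : 2⁻¹ * (x ^ m)⁻¹ ≤ ((z ^ m)⁻¹).re := by
  set w := z / x - 1
  have hx0 : (x : ℂ) ≠ 0 := by exact_mod_cast hx.ne'
  have hw : ‖w‖ ≤ (4 * m : ℝ)⁻¹ := by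
    rw [mem_closedBall, dist_eq_norm] at hz
    rw [show w = (z - x) / x by rw [sub_div, div_self hx0], norm_div, Complex.norm_real,
      Real.norm_of_nonneg hx.le, div_le_iff₀ hx]
    simpa [div_eq_inv_mul, mul_comm] using hz
  have hpow : ‖(1 + w) ^ m - 1‖ ≤ 1 / 3 := by
    grw [norm_one_add_pow_sub_one_le, hw, one_add_inv_four_mul_pow_le]
    norm_num
  have hz_eq : (z ^ m)⁻¹ = ((x ^ m)⁻¹ : ℝ) * ((1 + w) ^ m)⁻¹ := by
    rw [show 1 + w = z / x by ring, div_pow, inv_div]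
    push_cast
    field_simp
  rw [hz_eq, Complex.re_ofReal_mul, mul_comm]
  gcongr
  exact Complex.two_inv_le_re_inv hpow

theorem differentiableOn_cexp_neg_inv_pow (m : ℕ) :
    DifferentiableOn ℂ (fun z : ℂ => Complex.exp (-(z ^ m)⁻¹)) {0}ᶜ := fun _ hz =>
  ((differentiableAt_id.pow m).inv (pow_ne_zero m hz)).neg.cexp.differentiableWithinAt

theorem norm_iteratedDeriv_cexp_neg_inv_pow_le {m : ℕ} (hm : 1 ≤ m) {x : ℝ} (hx : 0 < x)
    (k : ℕ) :
    ‖iteratedDeriv k (fun z : ℂ => Complex.exp (-(z ^ m)⁻¹)) x‖ ≤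
      k ! * Real.exp (-(2⁻¹ * (x ^ m)⁻¹)) / (x / (4 * m)) ^ k := by
  have hm' : (1 : ℝ) ≤ m := by exact_mod_cast hm
  have hradius : x / (4 * m) < x := div_lt_self hx (by linarith)
  have hball : closedBall (x : ℂ) (x / (4 * m)) ⊆ {0}ᶜ := fun z hz (hz0 : z = 0) => by
    rw [hz0, mem_closedBall, dist_comm, dist_zero_right, Complex.norm_real,
      Real.norm_of_nonneg hx.le] at hz
    linarith
  refine Complex.norm_iteratedDeriv_le_of_forall_mem_sphere_norm_le k (by positivity)
    ((differentiableOn_cexp_neg_inv_pow m).diffContOnCl_ball hball) fun z hz => ?_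
  rw [Complex.norm_exp, Complex.neg_re, Real.exp_le_exp, neg_le_neg_iff]
  exact le_re_inv_pow_of_mem_closedBall hx (sphere_subset_closedBall hz)

theorem inv_pow_mul_exp_neg_inv_pow_le {m : ℕ} (hm : 1 ≤ m) {x : ℝ} (hx : 0 < x) (k : ℕ) :
    x⁻¹ ^ k * Real.exp (-(2⁻¹ * (x ^ m)⁻¹)) ≤ 2 ^ k * (k : ℝ) ^ ((k : ℝ) / m) := by
  have hm' : (1 : ℝ) ≤ m := by exact_mod_cast hm
  have hpow : x⁻¹ ^ k = ((x ^ m)⁻¹) ^ ((k : ℝ) / m) := by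
    rw [← inv_pow, ← Real.rpow_natCast_mul (by positivity), mul_div_cancel₀ _ (by positivity),
      Real.rpow_natCast]
  calc x⁻¹ ^ k * Real.exp (-(2⁻¹ * (x ^ m)⁻¹))
      ≤ ((k : ℝ) / m / 2⁻¹) ^ ((k : ℝ) / m) := by
        rw [hpow]
        exact Real.rpow_mul_exp_neg_mul_le (by positivity) (by norm_num) (by positivity)
    _ ≤ (2 * k) ^ ((k : ℝ) / m) := by
        gcongr
        rw [div_inv_eq_mul, mul_comm]
        gcongr
        exact div_le_self (by positivity) hm'
    _ = 2 ^ ((k : ℝ) / m) * (k : ℝ) ^ ((k : ℝ) / m) := Real.mul_rpow (by norm_num) (by positivity)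
    _ ≤ 2 ^ k * (k : ℝ) ^ ((k : ℝ) / m) := by
        gcongr
        rw [← Real.rpow_natCast]
        exact Real.rpow_le_rpow_of_exponent_le (by norm_num) (div_le_self (by positivity) hm')

/-- Let `m ≥ 1` be an integer.  For every integer `k ≥ 0` and every real
`x > 0`, the `k`-th derivative of `x ↦ exp(−x^{−m})` satisfies
`|D^k(e^{−x^{−m}})(x)| ≤ (8m)^k · k^{(1+1/m)·k}` (with the convention `0⁰ = 1`). -/
theorem iteratedDeriv_exp_neg_inv_pow_bound
    (m : ℕ) (hm : 1 ≤ m) (k : ℕ) (x : ℝ) (hx : 0 < x) :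
    |iteratedDeriv k (fun y : ℝ => Real.exp (-(y ^ m)⁻¹)) x| ≤
      (8 * m : ℝ) ^ k * (k : ℝ) ^ (((1 : ℝ) + 1 / m) * k) := by
  have hreal := Complex.iteratedDeriv_ofReal_eq (g := fun y : ℝ => Real.exp (-(y ^ m)⁻¹))
    isOpen_compl_singleton (differentiableOn_cexp_neg_inv_pow m) isOpen_Ioi
    (fun y (hy : 0 < y) => by simpa using hy.ne') (fun y _ => by push_cast; rfl) k hx
  calc |iteratedDeriv k (fun y : ℝ => Real.exp (-(y ^ m)⁻¹)) x|
      = ‖iteratedDeriv k (fun z : ℂ => Complex.exp (-(z ^ m)⁻¹)) x‖ := by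
        rw [← hreal, Complex.norm_real, Real.norm_eq_abs]
    _ ≤ k ! * Real.exp (-(2⁻¹ * (x ^ m)⁻¹)) / (x / (4 * m)) ^ k :=
        norm_iteratedDeriv_cexp_neg_inv_pow_le hm hx k
    _ = k ! * (4 * m) ^ k * (x⁻¹ ^ k * Real.exp (-(2⁻¹ * (x ^ m)⁻¹))) := by
        rw [div_pow, inv_pow]
        field_simp
    _ ≤ (k : ℝ) ^ k * (4 * m) ^ k * (2 ^ k * (k : ℝ) ^ ((k : ℝ) / m)) := by
        gcongr ?_ * _ * ?_
        · exact_mod_cast Nat.factorial_le_pow k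
        · exact inv_pow_mul_exp_neg_inv_pow_le hm hx k
    _ = (8 * m : ℝ) ^ k * (k : ℝ) ^ (((1 : ℝ) + 1 / m) * k) := by
        rw [show ((1 : ℝ) + 1 / m) * k = k + k / m by ring,
          Real.rpow_add_of_nonneg (by positivity) (by positivity) (by positivity),
          Real.rpow_natCast, show (8 * m : ℝ) = 2 * (4 * m) by ring, mul_pow (2 : ℝ)]
        ring
end

section
/- Let η ∈ (0, 1), A > 0, a > 0 and set B(ξ) = A · exp(−a · |ξ|^{1−η}). There exists a constant C depending only on η, A, a such that the following holds: for every δ > 0 and every sequence of measurable functions g_k : ℝ → ℂ (k ∈ ℤ_{≥0}) satisfying |g_k(ξ)| ≤ δ^{1/2} · (B(δ(ξ − ξ_k)) + B(δ(ξ + ξ_k))) for all ξ, where ξ_k = (2k+1)/(4δ), one has ∑_{k=0}^∞ ∫_{−1/2}^{1/2} |g_k(ξ)|² dξ ≤ C · δ. -/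
/-!
Write `h u = exp (-a |u| ^ (1 - η))` and `c_k = (2k+1)/4`; the hypothesis gives
`‖g_k ξ‖² ≤ 2δA² (h (δξ - c_k) + h (δξ + c_k))`. Over the window a rescaled translate of `h`
integrates to at most `‖h‖₁ / δ`, so each term is `O(1)`, which suffices for the at most `4δ`
indices `k < ⌊4δ⌋`. For larger `k` we have `c_k > δ`, so on the window both translates are
evaluated at distance at least `c_k / 2 ≥ k / 4` from the origin and the term is `O(δ h (k/4))`;
these are summable because `h` decays faster than any power.
-/

open MeasureTheory Real Filter Asymptotics Set

noncomputable def stretchedExp (a p u : ℝ) : ℝ := exp (-a * |u| ^ p)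

section StretchedExp

variable {a p : ℝ}

lemma stretchedExp_nonneg (u : ℝ) : 0 ≤ stretchedExp a p u := (exp_pos _).le

lemma stretchedExp_le_one (ha : 0 ≤ a) (u : ℝ) : stretchedExp a p u ≤ 1 := by
  rw [stretchedExp, exp_le_one_iff, neg_mul, neg_nonpos]
  positivity

lemma stretchedExp_le_of_abs_le (ha : 0 ≤ a) (hp : 0 ≤ p) {u v : ℝ} (huv : |u| ≤ |v|) :
    stretchedExp a p v ≤ stretchedExp a p u := by
  simp only [stretchedExp, neg_mul, exp_le_exp, neg_le_neg_iff]
  gcongr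

lemma continuous_stretchedExp (hp : 0 ≤ p) : Continuous (stretchedExp a p) :=
  continuous_exp.comp (continuous_const.mul ((continuous_rpow_const hp).comp continuous_abs))

lemma stretchedExp_isLittleO_rpow (ha : 0 < a) (hp : 0 < p) (s : ℝ) :
    stretchedExp a p =o[atTop] fun x ↦ x ^ s := by
  refine ((isLittleO_exp_neg_mul_rpow_atTop ha (s / p)).comp_tendsto
    (tendsto_rpow_atTop hp)).congr' ?_ ?_ <;>
  filter_upwards [eventually_ge_atTop 0] with x hx
  · simp [stretchedExp, abs_of_nonneg hx]
  · simp [← rpow_mul hx, mul_div_cancel₀ _ hp.ne']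

lemma integrable_stretchedExp (ha : 0 < a) (hp : 0 < p) : Integrable (stretchedExp a p) :=
  (continuous_stretchedExp hp.le).locallyIntegrable
    |>.integrable_of_isBigO_atTop_of_norm_isNegInvariant
      (ae_of_all _ fun x ↦ by simp [stretchedExp]) (stretchedExp_isLittleO_rpow ha hp (-2)).isBigO
      ⟨Ioi 1, Ioi_mem_atTop 1, integrableOn_Ioi_rpow_of_lt (by norm_num) one_pos⟩

lemma summable_stretchedExp_nat_div (ha : 0 < a) (hp : 0 < p) {r : ℝ} (hr : 0 < r) :
    Summable fun k : ℕ ↦ stretchedExp a p (k / r) := by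
  refine summable_of_isBigO_nat
    ((summable_nat_rpow.mpr (by norm_num : (-2 : ℝ) < -1)).div_const (r ^ (-2 : ℝ))) ?_
  refine ((stretchedExp_isLittleO_rpow ha hp (-2)).comp_tendsto
    (tendsto_natCast_atTop_atTop.atTop_div_const hr)).isBigO.congr_right fun k ↦
    div_rpow (Nat.cast_nonneg k) hr.le _

end StretchedExp

lemma setIntegral_comp_mul_sub_le {f : ℝ → ℝ} (hf : Integrable f) (hf0 : ∀ x, 0 ≤ f x) (s : Set ℝ)
    {δ : ℝ} (hδ : 0 < δ) (c : ℝ) : ∫ ξ in s, f (δ * ξ - c) ≤ (∫ x, f x) / δ :=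
  calc ∫ ξ in s, f (δ * ξ - c)
      ≤ ∫ ξ, f (δ * ξ - c) := setIntegral_le_integral
        ((hf.comp_sub_right c).comp_mul_left' hδ.ne') (ae_of_all _ fun _ ↦ hf0 _)
    _ = (∫ x, f x) / δ := by
      rw [Measure.integral_comp_mul_left (fun y ↦ f (y - c)), integral_sub_right_eq_self,
        abs_of_pos (inv_pos.mpr hδ), smul_eq_mul, inv_mul_eq_div]

lemma sq_le_two_mul_of_le_sqrt_mul {x δ A u v : ℝ} (hx : 0 ≤ x) (hδ : 0 ≤ δ)
    (hu : u ^ 2 ≤ u) (hv : v ^ 2 ≤ v) (h : x ≤ √δ * (A * u + A * v)) :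
    x ^ 2 ≤ 2 * δ * A ^ 2 * (u + v) :=
  calc x ^ 2 ≤ (√δ * (A * u + A * v)) ^ 2 := pow_le_pow_left₀ hx h 2
    _ = δ * (A * u + A * v) ^ 2 := by rw [mul_pow, sq_sqrt hδ]
    _ ≤ δ * (2 * ((A * u) ^ 2 + (A * v) ^ 2)) := by gcongr; exact add_sq_le
    _ = 2 * δ * A ^ 2 * (u ^ 2 + v ^ 2) := by ring
    _ ≤ 2 * δ * A ^ 2 * (u + v) := by gcongr

section WindowEnergy

variable {E : Type*} [SeminormedAddCommGroup E] {a p δ A c : ℝ} {g : ℝ → E}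

lemma norm_sq_le_of_le_stretchedExp (ha : 0 ≤ a) (hδ : 0 ≤ δ)
    (hg : ∀ ξ, ‖g ξ‖ ≤ √δ * (A * stretchedExp a p (δ * ξ - c) + A * stretchedExp a p (δ * ξ + c)))
    (ξ : ℝ) : ‖g ξ‖ ^ 2 ≤
      2 * δ * A ^ 2 * (stretchedExp a p (δ * ξ - c) + stretchedExp a p (δ * ξ + c)) :=
  sq_le_two_mul_of_le_sqrt_mul (norm_nonneg _) hδ (sq_le (stretchedExp_nonneg _)
    (stretchedExp_le_one ha _)) (sq_le (stretchedExp_nonneg _) (stretchedExp_le_one ha _)) (hg ξ)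

lemma setIntegral_norm_sq_le_integral_stretchedExp (ha : 0 < a) (hp : 0 < p) (hδ : 0 < δ)
    (hg : ∀ ξ, ‖g ξ‖ ≤ √δ * (A * stretchedExp a p (δ * ξ - c) + A * stretchedExp a p (δ * ξ + c)))
    (s : Set ℝ) : ∫ ξ in s, ‖g ξ‖ ^ 2 ≤ 4 * A ^ 2 * ∫ x, stretchedExp a p x := by
  have hint := integrable_stretchedExp ha hp
  have hint_sub : ∀ c' : ℝ, Integrable fun ξ ↦ stretchedExp a p (δ * ξ - c') := fun c' ↦
    (hint.comp_sub_right c').comp_mul_left' hδ.ne'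
  have hint_add : Integrable fun ξ ↦ stretchedExp a p (δ * ξ + c) := by
    simpa using hint_sub (-c)
  have hbound c' := setIntegral_comp_mul_sub_le hint stretchedExp_nonneg s hδ c'
  calc ∫ ξ in s, ‖g ξ‖ ^ 2
      ≤ ∫ ξ in s, 2 * δ * A ^ 2 * (stretchedExp a p (δ * ξ - c) + stretchedExp a p (δ * ξ + c)) :=
        integral_mono_of_nonneg (ae_of_all _ fun _ ↦ by positivity)
          (((hint_sub c).add hint_add).const_mul _).integrableOn
          (ae_of_all _ (norm_sq_le_of_le_stretchedExp ha.le hδ.le hg))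
    _ = 2 * δ * A ^ 2 * ((∫ ξ in s, stretchedExp a p (δ * ξ - c)) +
          ∫ ξ in s, stretchedExp a p (δ * ξ + c)) := by
        rw [integral_const_mul, integral_add (hint_sub c).integrableOn hint_add.integrableOn]
    _ ≤ 2 * δ * A ^ 2 * ((∫ x, stretchedExp a p x) / δ + (∫ x, stretchedExp a p x) / δ) := by
        gcongr
        exacts [hbound c, by simpa using hbound (-c)]
    _ = 4 * A ^ 2 * ∫ x, stretchedExp a p x := by field_simp; ring

lemma setIntegral_Icc_norm_sq_le_of_le (ha : 0 < a) (hp : 0 < p) (hδ : 0 < δ) (hδc : δ ≤ c)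
    (hg : ∀ ξ, ‖g ξ‖ ≤ √δ * (A * stretchedExp a p (δ * ξ - c) + A * stretchedExp a p (δ * ξ + c))) :
    ∫ ξ in Icc (-(1:ℝ)/2) (1/2), ‖g ξ‖ ^ 2 ≤ 4 * δ * A ^ 2 * stretchedExp a p (c / 2) := by
  have hpt : ∀ ξ ∈ Icc (-(1:ℝ)/2) (1/2), ‖g ξ‖ ^ 2 ≤ 4 * δ * A ^ 2 * stretchedExp a p (c / 2) := by
    rintro ξ ⟨hξl, hξr⟩
    have hc2 : |c / 2| = c / 2 := abs_of_pos (by linarith)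
    have hδξ : |δ * ξ| ≤ c / 2 := by
      rw [abs_le]
      constructor <;> nlinarith
    have hminus : |c / 2| ≤ |δ * ξ - c| := by
      rw [hc2]; linarith [neg_le_abs (δ * ξ - c), (abs_le.1 hδξ).2]
    have hplus : |c / 2| ≤ |δ * ξ + c| := by
      rw [hc2]; linarith [le_abs_self (δ * ξ + c), (abs_le.1 hδξ).1]
    calc ‖g ξ‖ ^ 2
        ≤ 2 * δ * A ^ 2 * (stretchedExp a p (δ * ξ - c) + stretchedExp a p (δ * ξ + c)) :=
          norm_sq_le_of_le_stretchedExp ha.le hδ.le hg ξ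
      _ ≤ 2 * δ * A ^ 2 * (stretchedExp a p (c / 2) + stretchedExp a p (c / 2)) := by
          gcongr <;> exact stretchedExp_le_of_abs_le ha.le hp.le ‹_›
      _ = 4 * δ * A ^ 2 * stretchedExp a p (c / 2) := by ring
  calc ∫ ξ in Icc (-(1:ℝ)/2) (1/2), ‖g ξ‖ ^ 2
      ≤ ∫ ξ in Icc (-(1:ℝ)/2) (1/2), 4 * δ * A ^ 2 * stretchedExp a p (c / 2) :=
        integral_mono_of_nonneg (ae_of_all _ fun _ ↦ by positivity)
          (integrable_const _) ((ae_restrict_iff' measurableSet_Icc).2 (ae_of_all _ hpt))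
    _ = 4 * δ * A ^ 2 * stretchedExp a p (c / 2) := by
        rw [setIntegral_const, Real.volume_real_Icc]; norm_num

end WindowEnergy

lemma tsum_le_tsum_add_mul_of_le {u e : ℕ → ℝ} {N : ℕ} {Y : ℝ} (hu : ∀ k, 0 ≤ u k)
    (he0 : ∀ k, 0 ≤ e k) (he : Summable e) (hhead : ∀ k < N, u k ≤ Y)
    (htail : ∀ k, N ≤ k → u k ≤ e k) :
    ∑' k, u k ≤ ∑' k, e k + N * Y := by
  have hbound : ∀ k, u k ≤ e k + if k < N then Y else 0 := fun k ↦ by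
    split_ifs with hk
    · linarith [hhead k hk, he0 k]
    · simpa using htail k (not_lt.1 hk)
  have hhead_sum : HasSum (fun k ↦ if k < N then Y else 0) (N * Y) := by
    have hsum : ∑ k ∈ Finset.range N, (if k < N then Y else 0) = N * Y := by
      rw [Finset.sum_ite_of_true fun k hk ↦ Finset.mem_range.1 hk]
      simp
    exact hsum ▸ hasSum_sum_of_ne_finset_zero fun k hk ↦ if_neg (by simpa using hk)
  have hsum := he.hasSum.add hhead_sum
  calc ∑' k, u k ≤ ∑' k, (e k + if k < N then Y else 0) :=
        Summable.tsum_le_tsum hbound (.of_nonneg_of_le hu hbound hsum.summable) hsum.summable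
    _ = ∑' k, e k + N * Y := hsum.tsum_eq

theorem total_low_frequency_energy_bound_general
    (η A a : ℝ) (hη : η ∈ Set.Ioo (0:ℝ) 1) (ha : 0 < a)
    (B : ℝ → ℝ) (hB : ∀ ξ : ℝ, B ξ = A * Real.exp (-a * |ξ| ^ (1 - η))) :
    ∃ C : ℝ, 0 < C ∧
      ∀ (δ : ℝ), 0 < δ → ∀ g : ℕ → ℝ → ℂ,
        (∀ k : ℕ, Measurable (g k)) →
        (∀ (k : ℕ) (ξ : ℝ), ‖g k ξ‖ ≤ Real.sqrt δ *
          (B (δ * (ξ - (2 * (k : ℝ) + 1) / (4 * δ))) +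
           B (δ * (ξ + (2 * (k : ℝ) + 1) / (4 * δ))))) →
        ∑' k : ℕ, ∫ ξ in Set.Icc (-(1:ℝ)/2) (1/2), ‖g k ξ‖ ^ 2 ≤ C * δ := by
  have hp : 0 < 1 - η := sub_pos.2 hη.2
  set h := stretchedExp a (1 - η)
  obtain rfl : B = fun x ↦ A * h x := funext hB
  set T := ∑' k : ℕ, h (k / 4)
  set J := ∫ x, h x
  have hT : 0 ≤ T := tsum_nonneg fun _ ↦ stretchedExp_nonneg _
  have hJ : 0 ≤ J := integral_nonneg stretchedExp_nonneg
  refine ⟨4 * A ^ 2 * T + 16 * A ^ 2 * J + 1, by positivity, fun δ hδ g _ hg ↦ ?_⟩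
  have hscale (c : ℝ) : δ * (c / (4 * δ)) = c / 4 := by field_simp
  have hgk (k : ℕ) (ξ : ℝ) : ‖g k ξ‖ ≤ √δ *
      (A * h (δ * ξ - (2 * k + 1) / 4) + A * h (δ * ξ + (2 * k + 1) / 4)) := by
    simpa only [mul_sub δ, mul_add δ, hscale] using hg k ξ
  have hfar (k : ℕ) (hk : ⌊4 * δ⌋₊ ≤ k) :
      ∫ ξ in Icc (-(1:ℝ)/2) (1/2), ‖g k ξ‖ ^ 2 ≤ 4 * δ * A ^ 2 * h (k / 4) := by
    have hδk : 4 * δ < k + 1 :=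
      (Nat.lt_floor_add_one _).trans_le (by exact_mod_cast Nat.succ_le_succ hk)
    refine (setIntegral_Icc_norm_sq_le_of_le ha hp hδ (by linarith) (hgk k)).trans ?_
    gcongr
    refine stretchedExp_le_of_abs_le ha.le hp.le ?_
    rw [abs_of_nonneg (by positivity), abs_of_nonneg (by positivity)]
    linarith
  calc ∑' k : ℕ, ∫ ξ in Icc (-(1:ℝ)/2) (1/2), ‖g k ξ‖ ^ 2
      ≤ ∑' k : ℕ, 4 * δ * A ^ 2 * h (k / 4) + ⌊4 * δ⌋₊ * (4 * A ^ 2 * J) :=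
        tsum_le_tsum_add_mul_of_le (fun _ ↦ integral_nonneg fun _ ↦ by positivity)
          (fun _ ↦ mul_nonneg (by positivity) (stretchedExp_nonneg _))
          (by exact (summable_stretchedExp_nat_div ha hp four_pos).mul_left _)
          (fun k _ ↦ setIntegral_norm_sq_le_integral_stretchedExp ha hp hδ (hgk k) _) hfar
    _ ≤ 4 * δ * A ^ 2 * T + 4 * δ * (4 * A ^ 2 * J) := by
        rw [tsum_mul_left]
        gcongr
        exact Nat.floor_le (by positivity)
    _ ≤ (4 * A ^ 2 * T + 16 * A ^ 2 * J + 1) * δ := by nlinarith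

/-- Let `η ∈ (0,1)`, `A > 0`, `a > 0`, and set
`B(ξ) = A·exp(−a·|ξ|^{1−η})`.  There exists a constant `C` depending only on `η, A, a`
such that: for every `δ > 0` and every sequence of measurable functions `g_k : ℝ → ℂ`
(`k ∈ ℤ_{≥0}`) satisfying `|g_k(ξ)| ≤ δ^{1/2}·(B(δ(ξ − ξ_k)) + B(δ(ξ + ξ_k)))` for all
`ξ`, where `ξ_k = (2k+1)/(4δ)`, one has `∑_{k=0}^∞ ∫_{−1/2}^{1/2} |g_k(ξ)|² dξ ≤ C·δ`. -/
theorem total_low_frequency_energy_bound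
    (η A a : ℝ) (hη : η ∈ Set.Ioo (0:ℝ) 1) (hA : 0 < A) (ha : 0 < a)
    (B : ℝ → ℝ) (hB : ∀ ξ : ℝ, B ξ = A * Real.exp (-a * |ξ| ^ (1 - η))) :
    ∃ C : ℝ, 0 < C ∧
      ∀ (δ : ℝ), 0 < δ → ∀ g : ℕ → ℝ → ℂ,
        (∀ k : ℕ, Measurable (g k)) →
        (∀ (k : ℕ) (ξ : ℝ), ‖g k ξ‖ ≤ Real.sqrt δ *
          (B (δ * (ξ - (2 * (k : ℝ) + 1) / (4 * δ))) +
           B (δ * (ξ + (2 * (k : ℝ) + 1) / (4 * δ))))) →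
        ∑' k : ℕ, ∫ ξ in Set.Icc (-(1:ℝ)/2) (1/2), ‖g k ξ‖ ^ 2 ≤ C * δ :=
  total_low_frequency_energy_bound_general η A a hη ha B hB
end
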